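/- arXiv:1509.04682 — 2 statements merged into one kernel-verified Lean document; each statement's English description precedes it below -/
import Mathlib

section
/- Under Assumption 1, if p^+ is finite (i.e., p^+ ∈ ℝ), then q^+ = p^+. -/
open Matrix

/-- The perturbed primal feasible set `P(b) = {x : Âx = b̂ + b, x ≥ 0}`. -/
def Pfeas (m n : ℕ) (Ahat : Matrix (Fin m) (Fin n) ℝ) (bhat b : Fin m → ℝ) :
    Set (Fin n → ℝ) :=
  {x | Ahat.mulVec x = bhat + b ∧ 0 ≤ x}

/-- The perturbed dual feasible set `D(c) = {(y,s) : Âᵀy + s = ĉ + c, s ≥ 0}`. -/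
def Dfeas (m n : ℕ) (Ahat : Matrix (Fin m) (Fin n) ℝ) (chat c : Fin n → ℝ) :
    Set ((Fin m → ℝ) × (Fin n → ℝ)) :=
  {ys | Ahat.transpose.mulVec ys.1 + ys.2 = chat + c ∧ 0 ≤ ys.2}

/-- The perturbed optimal value `p(b,c)` as an extended real number
(`sInf ∅ = +∞` in `EReal`). -/
noncomputable def pval (m n : ℕ) (Ahat : Matrix (Fin m) (Fin n) ℝ)
    (bhat b : Fin m → ℝ) (chat c : Fin n → ℝ) : EReal :=
  sInf ((fun x => (((chat + c) ⬝ᵥ x : ℝ) : EReal)) '' Pfeas m n Ahat bhat b)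

/-- The restricted uncertainty set `Ū = {(b,c) ∈ U : P(b) ≠ ∅, D(c) ≠ ∅}`. -/
def Ubar (m n : ℕ) (Ahat : Matrix (Fin m) (Fin n) ℝ) (bhat : Fin m → ℝ)
    (chat : Fin n → ℝ) (U : Set ((Fin m → ℝ) × (Fin n → ℝ))) :
    Set ((Fin m → ℝ) × (Fin n → ℝ)) :=
  {bc ∈ U | (Pfeas m n Ahat bhat bc.1).Nonempty ∧ (Dfeas m n Ahat chat bc.2).Nonempty}

/-!
A point `(b, c) ∈ U` with `P(b) = ∅` has `p(b, c) = +∞`, which the finiteness of `p⁺` rules out.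
If `P(b) ≠ ∅` but `D(c) = ∅`, Farkas' lemma gives a direction `d ≥ 0` with `Âd = 0` and
`(ĉ + c)ᵀd < 0`, along which the objective is unbounded below on `P(b)`, so `p(b, c) = -∞`.
Hence the points of `U \ Ū` do not affect the supremum. Farkas' lemma itself is the separation
of `ĉ + c` from the cone `{Âᵀy + s : s ≥ 0}`, which is finitely generated and therefore closed by
the conic Carathéodory theorem.
-/

namespace PointedCone

variable {E : Type*} [NormedAddCommGroup E] [NormedSpace ℝ E]

lemma mem_hull_finset_iff {s : Finset E} {x : E} :
    x ∈ hull ℝ (s : Set E) ↔ ∃ t : E → ℝ, (∀ y ∈ s, 0 ≤ t y) ∧ ∑ y ∈ s, t y • y = x := by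
  constructor
  · intro hx
    obtain ⟨f, -, rfl⟩ := Submodule.mem_span_finset.mp hx
    exact ⟨fun y => f y, fun y _ => (f y).2, rfl⟩
  · rintro ⟨t, ht, rfl⟩
    exact Submodule.sum_mem _ fun y hy =>
      Submodule.smul_mem _ (⟨t y, ht y hy⟩ : {c : ℝ // 0 ≤ c}) (Submodule.subset_span hy)

lemma hull_finset_eq_biUnion_hull_erase [DecidableEq E] {s : Finset E}
    (hs : ¬LinearIndepOn ℝ id (s : Set E)) :
    (hull ℝ (s : Set E) : Set E) = ⋃ y ∈ s, (hull ℝ (s.erase y : Set E) : Set E) := by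
  refine subset_antisymm (fun x hx => ?_)
    (Set.iUnion₂_subset fun y _ => Submodule.span_mono (s.erase_subset y))
  obtain ⟨g, hg, hneg⟩ : ∃ g : E → ℝ, ∑ y ∈ s, g y • y = 0 ∧ ∃ y ∈ s, g y < 0 := by
    obtain ⟨g, hg, y, hy, hgy⟩ := not_linearIndepOn_finset_iff.mp hs
    simp only [id] at hg
    rcases hgy.lt_or_gt with hlt | hgt
    · exact ⟨g, hg, y, hy, hlt⟩
    · exact ⟨-g, by simp [neg_smul, Finset.sum_neg_distrib, hg], y, hy, by simpa using hgt⟩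
  obtain ⟨t, ht, rfl⟩ := mem_hull_finset_iff.mp hx
  -- Move from `t` along the relation `g` until the first coefficient vanishes.
  obtain ⟨y₀, hy₀, hmin⟩ := (s.filter (g · < 0)).exists_min_image (fun y => t y / -g y)
    (by simpa [Finset.filter_nonempty_iff] using hneg)
  rw [Finset.mem_filter] at hy₀
  set lam := t y₀ / -g y₀ with hlam_def
  have hlam : 0 ≤ lam := div_nonneg (ht y₀ hy₀.1) (by linarith [hy₀.2])
  have hnonneg : ∀ y ∈ s, 0 ≤ t y + lam * g y := by
    intro y hy
    rcases lt_or_ge (g y) 0 with hgy | hgy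
    · have := hmin y (Finset.mem_filter.mpr ⟨hy, hgy⟩)
      rw [le_div_iff₀ (neg_pos.mpr hgy)] at this
      linarith
    · exact add_nonneg (ht y hy) (mul_nonneg hlam hgy)
  have hzero : t y₀ + lam * g y₀ = 0 := by
    rw [hlam_def, div_neg, neg_mul, div_mul_cancel₀ _ hy₀.2.ne, add_neg_cancel]
  refine Set.mem_biUnion hy₀.1 (mem_hull_finset_iff.mpr
    ⟨fun y => t y + lam * g y, fun y hy => hnonneg y (Finset.mem_of_mem_erase hy), ?_⟩)
  calc ∑ y ∈ s.erase y₀, (t y + lam * g y) • y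
      = ∑ y ∈ s, (t y + lam * g y) • y := Finset.sum_erase s (by simp [hzero])
    _ = ∑ y ∈ s, t y • y + lam • ∑ y ∈ s, g y • y := by
      simp only [add_smul, mul_smul, Finset.sum_add_distrib, Finset.smul_sum]
    _ = ∑ y ∈ s, t y • y := by rw [hg, smul_zero, add_zero]

lemma isClosed_hull_of_linearIndepOn {s : Finset E} (hs : LinearIndepOn ℝ id (s : Set E)) :
    IsClosed (hull ℝ (s : Set E) : Set E) := by
  set L := Fintype.linearCombination ℝ (fun y : s => (y : E))
  have hL : Topology.IsClosedEmbedding L := L.isClosedEmbedding_of_injective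
    (LinearMap.ker_eq_bot.mpr (linearIndependent_iff_injective_fintypeLinearCombination.mp hs))
  have hhull : (hull ℝ (s : Set E) : Set E) = L '' Set.Ici 0 := by
    ext x
    simp only [SetLike.mem_coe, Submodule.mem_span_finset', Set.mem_image, Set.mem_Ici, L,
      Fintype.linearCombination_apply]
    constructor
    · rintro ⟨f, rfl⟩
      exact ⟨fun y => f y, fun y => (f y).2, rfl⟩
    · rintro ⟨t, ht, rfl⟩
      exact ⟨fun y => ⟨t y, ht y⟩, rfl⟩
  rw [hhull]
  exact hL.isClosedMap _ isClosed_Ici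

theorem isClosed_of_fg {C : PointedCone ℝ E} (hC : C.FG) : IsClosed (C : Set E) := by
  classical
  obtain ⟨s, rfl⟩ := hC
  induction s using Finset.strongInduction with
  | H s ih =>
    by_cases hs : LinearIndepOn ℝ id (s : Set E)
    · exact isClosed_hull_of_linearIndepOn hs
    · rw [hull_finset_eq_biUnion_hull_erase hs]
      exact s.finite_toSet.isClosed_biUnion fun y hy =>
        ih _ (Finset.erase_ssubset hy)

end PointedCone

lemma StrongDual.apply_eq_dotProduct {n : Type*} [Fintype n] [DecidableEq n]
    (f : StrongDual ℝ (n → ℝ)) (x : n → ℝ) :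
    f x = (fun i => f (Pi.single i 1)) ⬝ᵥ x := by
  conv_lhs => rw [← Finset.univ_sum_single x]
  simp only [map_sum, dotProduct]
  refine Finset.sum_congr rfl fun i _ => ?_
  rw [mul_comm, ← smul_eq_mul, ← map_smul, ← Pi.single_smul, smul_eq_mul, mul_one]

theorem Matrix.exists_nonneg_mulVec_eq_zero_dotProduct_neg {m n : Type*} [Fintype m] [Fintype n]
    (A : Matrix m n ℝ) (c : n → ℝ) (h : ¬∃ y s, 0 ≤ s ∧ Aᵀ *ᵥ y + s = c) :
    ∃ d, 0 ≤ d ∧ A *ᵥ d = 0 ∧ c ⬝ᵥ d < 0 := by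
  classical
  -- `S` generates `{Aᵀy + s : s ≥ 0}`; the rows of `A` come with both signs since `y` is free.
  set S : Set (n → ℝ) :=
    Set.range A.row ∪ Set.range (fun j => -A.row j) ∪ Set.range fun i => Pi.single i 1
  let C : ProperCone ℝ (n → ℝ) :=
    ⟨PointedCone.hull ℝ S, PointedCone.isClosed_of_fg (Submodule.fg_span
      ((Set.finite_range _).union (Set.finite_range _) |>.union (Set.finite_range _)))⟩
  have hCS : S ⊆ C := Submodule.subset_span
  have hcC : c ∉ C := by
    let K : PointedCone ℝ (n → ℝ) :=
      (LinearMap.range (Aᵀ.mulVecLin)).restrictScalars _ ⊔ PointedCone.positive ℝ (n → ℝ)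
    have hCK : (C : Set (n → ℝ)) ⊆ K := by
      refine Submodule.span_le.mpr ?_
      rintro x ((⟨j, rfl⟩ | ⟨j, rfl⟩) | ⟨i, rfl⟩)
      · exact Submodule.mem_sup_left ⟨Pi.single j 1, by simp⟩
      · exact Submodule.mem_sup_left ⟨-Pi.single j 1, by simp⟩
      · exact Submodule.mem_sup_right (by simp [PointedCone.mem_positive, Pi.single_nonneg])
    intro hc
    obtain ⟨_, ⟨y, rfl⟩, s, hs, hys⟩ := Submodule.mem_sup.mp (hCK hc)
    exact h ⟨y, s, hs, hys⟩
  obtain ⟨f, hf, hfc⟩ := C.hyperplane_separation_point hcC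
  refine ⟨fun i => f (Pi.single i 1), fun i => hf _ (hCS (Or.inr ⟨i, rfl⟩)), ?_, ?_⟩
  · ext j
    have h₁ := hf _ (hCS (Or.inl (Or.inl ⟨j, rfl⟩)))
    have h₂ := hf _ (hCS (Or.inl (Or.inr ⟨j, rfl⟩)))
    rw [map_neg, neg_nonneg] at h₂
    rw [mulVec, dotProduct_comm, ← StrongDual.apply_eq_dotProduct]
    exact le_antisymm h₂ h₁
  · rwa [dotProduct_comm, ← StrongDual.apply_eq_dotProduct]

section LinearProgram

variable {m n : ℕ} {Ahat : Matrix (Fin m) (Fin n) ℝ} {bhat b : Fin m → ℝ} {chat c : Fin n → ℝ}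

lemma pval_eq_top_of_primal_infeasible (hP : ¬(Pfeas m n Ahat bhat b).Nonempty) :
    pval m n Ahat bhat b chat c = ⊤ := by
  rw [pval, Set.not_nonempty_iff_eq_empty.mp hP, Set.image_empty, sInf_empty]

lemma pval_eq_bot_of_improving_ray {x₀ d : Fin n → ℝ} (hx₀ : x₀ ∈ Pfeas m n Ahat bhat b)
    (hd : 0 ≤ d) (hAd : Ahat *ᵥ d = 0) (hcd : (chat + c) ⬝ᵥ d < 0) :
    pval m n Ahat bhat b chat c = ⊥ := by
  refine (EReal.eq_bot_iff_forall_lt _).mpr fun r => ?_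
  have hray : Filter.Tendsto (fun t : ℝ => (chat + c) ⬝ᵥ x₀ + t * ((chat + c) ⬝ᵥ d))
      Filter.atTop Filter.atBot :=
    Filter.tendsto_atBot_add_const_left _ _ (Filter.tendsto_id.atTop_mul_const_of_neg hcd)
  obtain ⟨t, ht, hlt⟩ :=
    ((Filter.eventually_ge_atTop 0).and (hray.eventually (Filter.eventually_lt_atBot r))).exists
  have hfeas : x₀ + t • d ∈ Pfeas m n Ahat bhat b :=
    ⟨by rw [mulVec_add, mulVec_smul, hAd, smul_zero, add_zero, hx₀.1],
      add_nonneg hx₀.2 (smul_nonneg ht hd)⟩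
  calc pval m n Ahat bhat b chat c ≤ (((chat + c) ⬝ᵥ (x₀ + t • d) : ℝ) : EReal) :=
        sInf_le ⟨_, hfeas, rfl⟩
    _ < r := by
      rw [dotProduct_add, dotProduct_smul, smul_eq_mul]
      exact_mod_cast hlt

lemma pval_eq_bot_of_dual_infeasible (hP : (Pfeas m n Ahat bhat b).Nonempty)
    (hD : ¬(Dfeas m n Ahat chat c).Nonempty) :
    pval m n Ahat bhat b chat c = ⊥ := by
  obtain ⟨x₀, hx₀⟩ := hP
  obtain ⟨d, hd, hAd, hcd⟩ := Ahat.exists_nonneg_mulVec_eq_zero_dotProduct_neg (chat + c)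
    fun ⟨y, s, hs, hys⟩ => hD ⟨(y, s), hys, hs⟩
  exact pval_eq_bot_of_improving_ray hx₀ hd hAd hcd

end LinearProgram

theorem q_plus_eq_p_plus_of_finite_general (m n : ℕ)
    (Ahat : Matrix (Fin m) (Fin n) ℝ) (bhat : Fin m → ℝ) (chat : Fin n → ℝ)
    (U : Set ((Fin m → ℝ) × (Fin n → ℝ)))
    (hfin : ∃ v : ℝ,
      sSup ((fun bc => pval m n Ahat bhat bc.1 chat bc.2) '' U) = (v : EReal)) :
    sSup ((fun bc => pval m n Ahat bhat bc.1 chat bc.2) ''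
        Ubar m n Ahat bhat chat U) =
      sSup ((fun bc => pval m n Ahat bhat bc.1 chat bc.2) '' U) := by
  obtain ⟨v, hv⟩ := hfin
  refine le_antisymm (sSup_le_sSup (Set.image_mono fun bc hbc => hbc.1))
    (sSup_le (Set.forall_mem_image.mpr fun bc hbc => ?_))
  have hP : (Pfeas m n Ahat bhat bc.1).Nonempty := by
    by_contra hP
    have hle : pval m n Ahat bhat bc.1 chat bc.2 ≤ v := hv ▸ le_sSup ⟨bc, hbc, rfl⟩
    rw [pval_eq_top_of_primal_infeasible hP] at hle
    exact EReal.coe_ne_top v (top_le_iff.mp hle)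
  by_cases hD : (Dfeas m n Ahat chat bc.2).Nonempty
  · exact le_sSup ⟨bc, ⟨hbc, hP, hD⟩, rfl⟩
  · rw [pval_eq_bot_of_dual_infeasible hP hD]
    exact bot_le

/-- Under Assumption 1 (`U` compact, convex, containing `(0,0)`),
if `p⁺ = sup{p(b,c) : (b,c) ∈ U}` is a finite real number, then
`q⁺ = sup{p(b,c) : (b,c) ∈ Ū}` equals `p⁺`. -/
theorem q_plus_eq_p_plus_of_finite (m n : ℕ)
    (Ahat : Matrix (Fin m) (Fin n) ℝ) (bhat : Fin m → ℝ) (chat : Fin n → ℝ)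
    (U : Set ((Fin m → ℝ) × (Fin n → ℝ)))
    (hUcompact : IsCompact U) (hUconvex : Convex ℝ U) (hU0 : (0, 0) ∈ U)
    (hfin : ∃ v : ℝ,
      sSup ((fun bc => pval m n Ahat bhat bc.1 chat bc.2) '' U) = (v : EReal)) :
    sSup ((fun bc => pval m n Ahat bhat bc.1 chat bc.2) ''
        Ubar m n Ahat bhat chat U) =
      sSup ((fun bc => pval m n Ahat bhat bc.1 chat bc.2) '' U) :=
  q_plus_eq_p_plus_of_finite_general m n Ahat bhat chat U hfin
end

section
/- Under Assumptions 1 and 2, the restricted best- and worst-case values equal the optimal values of the primal-dual bilinear programs: q^- = inf{(ĉ+c)^T x : Âx = b̂+b, x ≥ 0, Â^T y + s = ĉ+c, s ≥ 0, (b,c) ∈ U} and q^+ = sup{(b̂+b)^T y : Âx = b̂+b, x ≥ 0, Â^T y + s = ĉ+c, s ≥ 0, (b,c) ∈ U}. -/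
/-!
For `(b, c) ∈ Ū` the first identity only unfolds `p(b, c)` as an infimum over `P(b)`, the
dual constraints being satisfiable side conditions. For the second, LP strong duality gives
`p(b, c) = sup {(b̂ + b)ᵀ y : (y, s) ∈ D(c)}` as soon as `P(b) ≠ ∅`, so both sides are suprema of
the same values. Strong duality follows from Farkas' lemma, i.e. hyperplane separation from the
cone `{A x : x ≥ 0}`; this cone is closed because, when `A` is not injective, moving along a
kernel vector turns every conic combination into one that omits a column, so by induction on
the number of columns the cone is a finite union of closed cones.
-/

open Matrix

namespace Matrix

variable {m n : Type*}

theorem exists_nonneg_mulVec_eq_of_mulVec_eq_zero [Fintype n] {A : Matrix m n ℝ} {w : n → ℝ}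
    (hw : A *ᵥ w = 0) (hneg : ∃ j, w j < 0) {x : n → ℝ} (hx : 0 ≤ x) :
    ∃ j, ∃ x' : n → ℝ, 0 ≤ x' ∧ x' j = 0 ∧ A *ᵥ x' = A *ᵥ x := by
  classical
  obtain ⟨j, hj, hjmin⟩ := (Finset.univ.filter fun k => w k < 0).exists_min_image
    (fun k => x k / -w k) (by obtain ⟨k, hk⟩ := hneg; exact ⟨k, by simpa using hk⟩)
  simp only [Finset.mem_filter, Finset.mem_univ, true_and] at hj hjmin
  -- `t` is the largest step along `w` that keeps `x + t • w` nonnegative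
  set t := x j / -w j
  refine ⟨j, x + t • w, fun k => ?_, ?_, by rw [mulVec_add, mulVec_smul, hw, smul_zero, add_zero]⟩
  · simp only [Pi.zero_apply, Pi.add_apply, Pi.smul_apply, smul_eq_mul]
    rcases lt_or_ge (w k) 0 with hk | hk
    · have := (le_div_iff₀ (neg_pos.mpr hk)).mp (hjmin k hk)
      linarith
    · exact add_nonneg (hx k) (mul_nonneg (div_nonneg (hx j) (neg_pos.mpr hj).le) hk)
  · simp only [Pi.add_apply, Pi.smul_apply, smul_eq_mul, t]
    rw [div_neg, neg_mul, div_mul_cancel₀ _ hj.ne, add_neg_cancel]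

theorem mulVec_insertNth_zero {k : ℕ} (A : Matrix m (Fin (k + 1)) ℝ) (j : Fin (k + 1))
    (x : Fin k → ℝ) : A *ᵥ j.insertNth 0 x = A.submatrix id j.succAbove *ᵥ x := by
  ext i
  simp [mulVec, dotProduct, Fin.sum_univ_succAbove _ j]

theorem image_mulVec_Ici_eq_iUnion_submatrix_succAbove {k : ℕ} {A : Matrix m (Fin (k + 1)) ℝ}
    {w : Fin (k + 1) → ℝ} (hw : A *ᵥ w = 0) (hneg : ∃ j, w j < 0) :
    (A *ᵥ ·) '' Set.Ici 0 = ⋃ j : Fin (k + 1), (A.submatrix id j.succAbove *ᵥ ·) '' Set.Ici 0 := by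
  ext v
  simp only [Set.mem_image, Set.mem_Ici, Set.mem_iUnion]
  constructor
  · rintro ⟨x, hx, rfl⟩
    obtain ⟨j, x', hx', hx'j, hAx'⟩ := exists_nonneg_mulVec_eq_of_mulVec_eq_zero hw hneg hx
    refine ⟨j, j.removeNth x', fun i => hx' _, ?_⟩
    rw [← mulVec_insertNth_zero, ← hx'j, Fin.insertNth_self_removeNth, hAx']
  · rintro ⟨j, x, hx, rfl⟩
    refine ⟨j.insertNth 0 x, fun i => ?_, mulVec_insertNth_zero A j x⟩
    induction i using j.succAboveCases
    · simp
    · simpa using hx _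

theorem isClosed_image_mulVec_Ici {k : ℕ} (A : Matrix m (Fin k) ℝ) :
    IsClosed ((A *ᵥ ·) '' Set.Ici 0) := by
  induction k with
  | zero =>
    have hker : LinearMap.ker A.mulVecLin = ⊥ := Subsingleton.elim _ _
    exact (LinearMap.isClosedEmbedding_of_injective hker).isClosedMap _ isClosed_Ici
  | succ k ih =>
    by_cases hker : LinearMap.ker A.mulVecLin = ⊥
    · exact (LinearMap.isClosedEmbedding_of_injective hker).isClosedMap _ isClosed_Ici
    obtain ⟨u, hu, hu0⟩ := (Submodule.ne_bot_iff _).mp hker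
    obtain ⟨j, hj⟩ := Function.ne_iff.mp hu0
    obtain ⟨w, hw, hwneg⟩ : ∃ w, A *ᵥ w = 0 ∧ ∃ j, w j < 0 := by
      rcases hj.lt_or_gt with h | h
      · exact ⟨u, hu, j, h⟩
      · exact ⟨-u, by simpa [mulVec_neg] using hu, j, by simpa using h⟩
    rw [image_mulVec_Ici_eq_iUnion_submatrix_succAbove hw hwneg]
    exact isClosed_iUnion_of_finite fun j => ih _

theorem farkas [Fintype m] {k : ℕ} (A : Matrix m (Fin k) ℝ) {b : m → ℝ}
    (hb : b ∉ (A *ᵥ ·) '' Set.Ici 0) : ∃ y, 0 ≤ Aᵀ *ᵥ y ∧ b ⬝ᵥ y < 0 := by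
  classical
  let C : ProperCone ℝ (m → ℝ) :=
    ⟨(PointedCone.positive ℝ (Fin k → ℝ)).map A.mulVecLin, A.isClosed_image_mulVec_Ici⟩
  obtain ⟨f, hfC, hfb⟩ := C.hyperplane_separation_point hb
  set y : m → ℝ := fun i => f (Pi.single i 1)
  have hf : ∀ v, f v = v ⬝ᵥ y := fun v => by
    conv_lhs => rw [pi_eq_sum_univ' v]
    simp [dotProduct, y]
  refine ⟨y, fun j => ?_, by rwa [← hf]⟩
  have := hfC (A *ᵥ Pi.single j 1) ⟨Pi.single j 1, by simp [Pi.single_nonneg], rfl⟩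
  rwa [hf, dotProduct_comm, dotProduct_mulVec, ← mulVec_transpose, dotProduct_single_one] at this

theorem weak_duality [Fintype m] [Fintype n] {A : Matrix m n ℝ} {b : m → ℝ} {c x : n → ℝ}
    {y : m → ℝ} (hx : 0 ≤ x) (hAx : A *ᵥ x = b) (hy : Aᵀ *ᵥ y ≤ c) : b ⬝ᵥ y ≤ c ⬝ᵥ x :=
  calc b ⬝ᵥ y = x ⬝ᵥ Aᵀ *ᵥ y := by rw [dotProduct_transpose_mulVec, hAx, dotProduct_comm]
    _ ≤ x ⬝ᵥ c := dotProduct_le_dotProduct_of_nonneg_left hy hx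
    _ = c ⬝ᵥ x := dotProduct_comm _ _

theorem exists_dual_feasible_gt [Fintype m] {k : ℕ} {A : Matrix m (Fin k) ℝ} {b : m → ℝ}
    {c : Fin k → ℝ} {r : ℝ} (hfeas : ∃ x, 0 ≤ x ∧ A *ᵥ x = b)
    (hr : ∀ x, 0 ≤ x → A *ᵥ x = b → r < c ⬝ᵥ x) : ∃ y, Aᵀ *ᵥ y ≤ c ∧ r < b ⬝ᵥ y := by
  obtain ⟨x₀, hx₀, hAx₀⟩ := hfeas
  -- `r` is a strict lower bound, so `x ≥ 0, A x = b, c ⬝ᵥ x = r` has no solution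
  have hinfeas : Sum.elim b (fun _ : Unit => r) ∉
      (fromRows A (replicateRow Unit c) *ᵥ ·) '' Set.Ici 0 := by
    rintro ⟨x, hx, hAcx⟩
    have hAx : A *ᵥ x = b := funext fun i => by
      simpa [fromRows_mulVec] using congrFun hAcx (.inl i)
    have hcx : c ⬝ᵥ x = r := by simpa [mulVec, replicateRow] using congrFun hAcx (.inr ())
    exact (hr x hx hAx).ne' hcx
  obtain ⟨w, hw, hwb⟩ := farkas _ hinfeas
  set y := w ∘ Sum.inl
  set τ := w (Sum.inr ())
  have hw_eq : w = Sum.elim y (fun _ => τ) := by ext (_ | _) <;> rfl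
  rw [hw_eq, transpose_fromRows, fromCols_mulVec_sumElim, transpose_replicateRow] at hw
  replace hwb : b ⬝ᵥ y + r * τ < 0 := by simpa [hw_eq] using hwb
  replace hw : 0 ≤ Aᵀ *ᵥ y + τ • c := by
    convert hw using 2
    ext j
    simp [mulVec, dotProduct, replicateCol, mul_comm]
  have hτ : 0 < τ := by
    by_contra! hτ
    have hbc : 0 ≤ b ⬝ᵥ y + τ * (c ⬝ᵥ x₀) := by
      have := dotProduct_nonneg_of_nonneg hx₀ hw
      rwa [dotProduct_add, dotProduct_smul, dotProduct_transpose_mulVec, hAx₀,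
        dotProduct_comm y, dotProduct_comm x₀, smul_eq_mul] at this
    nlinarith [mul_le_mul_of_nonpos_left (hr x₀ hx₀ hAx₀).le hτ]
  refine ⟨-τ⁻¹ • y, fun j => ?_, ?_⟩
  · have := hw j
    simp only [Pi.zero_apply, Pi.add_apply, Pi.smul_apply, smul_eq_mul] at this
    rw [neg_smul, mulVec_neg, mulVec_smul, Pi.neg_apply, Pi.smul_apply, smul_eq_mul, neg_le,
      inv_mul_eq_div, le_div_iff₀ hτ]
    linarith
  · rw [neg_smul, dotProduct_neg, dotProduct_smul, smul_eq_mul, lt_neg, inv_mul_eq_div,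
      div_lt_iff₀ hτ]
    linarith

end Matrix

section PerturbedLP

variable {m n : ℕ} {Ahat : Matrix (Fin m) (Fin n) ℝ} {bhat b : Fin m → ℝ} {chat c : Fin n → ℝ}

theorem pval_le_dotProduct {x : Fin n → ℝ} (hx : x ∈ Pfeas m n Ahat bhat b) :
    pval m n Ahat bhat b chat c ≤ (((chat + c) ⬝ᵥ x : ℝ) : EReal) :=
  sInf_le ⟨x, hx, rfl⟩

theorem dotProduct_le_pval {ys : (Fin m → ℝ) × (Fin n → ℝ)} (hys : ys ∈ Dfeas m n Ahat chat c) :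
    (((bhat + b) ⬝ᵥ ys.1 : ℝ) : EReal) ≤ pval m n Ahat bhat b chat c := by
  refine le_sInf ?_
  rintro _ ⟨x, ⟨hAx, hx⟩, rfl⟩
  exact EReal.coe_le_coe_iff.mpr <| weak_duality hx hAx <| hys.1 ▸ le_add_of_nonneg_right hys.2

theorem pval_eq_sSup_dual (hP : (Pfeas m n Ahat bhat b).Nonempty) :
    pval m n Ahat bhat b chat c =
      sSup ((fun ys => (((bhat + b) ⬝ᵥ ys.1 : ℝ) : EReal)) '' Dfeas m n Ahat chat c) := by
  refine le_antisymm (EReal.ge_of_forall_gt_iff_ge.mp fun r hr => ?_) (sSup_le ?_)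
  · obtain ⟨x₀, hAx₀, hx₀⟩ := hP
    obtain ⟨y, hy, hry⟩ := exists_dual_feasible_gt ⟨x₀, hx₀, hAx₀⟩ fun x hx hAx =>
      EReal.coe_lt_coe_iff.mp (hr.trans_le (pval_le_dotProduct ⟨hAx, hx⟩))
    exact le_sSup_of_le ⟨(y, chat + c - Ahatᵀ *ᵥ y), ⟨add_sub_cancel _ _, sub_nonneg.mpr hy⟩, rfl⟩
      (EReal.coe_le_coe_iff.mpr hry.le)
  · rintro _ ⟨ys, hys, rfl⟩
    exact dotProduct_le_pval hys

end PerturbedLP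

theorem q_values_primal_dual_bilinear_formulations_general (m n : ℕ)
    (Ahat : Matrix (Fin m) (Fin n) ℝ) (bhat : Fin m → ℝ) (chat : Fin n → ℝ)
    (U : Set ((Fin m → ℝ) × (Fin n → ℝ))) :
    sInf ((fun bc => pval m n Ahat bhat bc.1 chat bc.2) ''
        Ubar m n Ahat bhat chat U) =
      sInf {e : EReal | ∃ b c x y s, (b, c) ∈ U ∧
        Ahat.mulVec x = bhat + b ∧ 0 ≤ x ∧
        Ahat.transpose.mulVec y + s = chat + c ∧ 0 ≤ s ∧
        e = (((chat + c) ⬝ᵥ x : ℝ) : EReal)} ∧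
    sSup ((fun bc => pval m n Ahat bhat bc.1 chat bc.2) ''
        Ubar m n Ahat bhat chat U) =
      sSup {e : EReal | ∃ b c x y s, (b, c) ∈ U ∧
        Ahat.mulVec x = bhat + b ∧ 0 ≤ x ∧
        Ahat.transpose.mulVec y + s = chat + c ∧ 0 ≤ s ∧
        e = (((bhat + b) ⬝ᵥ y : ℝ) : EReal)} := by
  constructor
  · refine le_antisymm (le_sInf ?_) (le_sInf ?_)
    · rintro _ ⟨b, c, x, y, s, hbc, hAx, hx, hys, hs, rfl⟩
      have hUbar : (b, c) ∈ Ubar m n Ahat bhat chat U := ⟨hbc, ⟨x, hAx, hx⟩, ⟨(y, s), hys, hs⟩⟩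
      exact (sInf_le (Set.mem_image_of_mem _ hUbar)).trans (pval_le_dotProduct ⟨hAx, hx⟩)
    · rintro _ ⟨⟨b, c⟩, ⟨hbc, -, ⟨y, s⟩, hys, hs⟩, rfl⟩
      refine le_sInf ?_
      rintro _ ⟨x, ⟨hAx, hx⟩, rfl⟩
      exact sInf_le ⟨b, c, x, y, s, hbc, hAx, hx, hys, hs, rfl⟩
  · refine le_antisymm (sSup_le ?_) (sSup_le ?_)
    · rintro _ ⟨⟨b, c⟩, ⟨hbc, ⟨x, hAx, hx⟩, -⟩, rfl⟩
      show pval m n Ahat bhat b chat c ≤ _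
      rw [pval_eq_sSup_dual ⟨x, hAx, hx⟩]
      refine sSup_le ?_
      rintro _ ⟨⟨y, s⟩, ⟨hys, hs⟩, rfl⟩
      exact le_sSup ⟨b, c, x, y, s, hbc, hAx, hx, hys, hs, rfl⟩
    · rintro _ ⟨b, c, x, y, s, hbc, hAx, hx, hys, hs, rfl⟩
      have hUbar : (b, c) ∈ Ubar m n Ahat bhat chat U := ⟨hbc, ⟨x, hAx, hx⟩, ⟨(y, s), hys, hs⟩⟩
      exact le_sSup_of_le (Set.mem_image_of_mem _ hUbar)
        (dotProduct_le_pval (ys := (y, s)) ⟨hys, hs⟩)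

/-- Under Assumption 1 (`U` compact, convex, containing
`(0,0)`) and Assumption 2 (`P(0)` and `D(0)` nonempty, at least one bounded),
the restricted best- and worst-case values equal the optimal values of the
primal-dual bilinear programs:
`q⁻ = inf{(ĉ+c)ᵀx : Âx = b̂+b, x ≥ 0, Âᵀy + s = ĉ+c, s ≥ 0, (b,c) ∈ U}` and
`q⁺ = sup{(b̂+b)ᵀy : Âx = b̂+b, x ≥ 0, Âᵀy + s = ĉ+c, s ≥ 0, (b,c) ∈ U}`. -/
theorem q_values_primal_dual_bilinear_formulations (m n : ℕ)
    (Ahat : Matrix (Fin m) (Fin n) ℝ) (bhat : Fin m → ℝ) (chat : Fin n → ℝ)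
    (U : Set ((Fin m → ℝ) × (Fin n → ℝ)))
    (hUcompact : IsCompact U) (hUconvex : Convex ℝ U) (hU0 : (0, 0) ∈ U)
    (hP0 : (Pfeas m n Ahat bhat 0).Nonempty) (hD0 : (Dfeas m n Ahat chat 0).Nonempty)
    (hbdd : Bornology.IsBounded (Pfeas m n Ahat bhat 0) ∨
      Bornology.IsBounded (Dfeas m n Ahat chat 0)) :
    sInf ((fun bc => pval m n Ahat bhat bc.1 chat bc.2) ''
        Ubar m n Ahat bhat chat U) =
      sInf {e : EReal | ∃ b c x y s, (b, c) ∈ U ∧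
        Ahat.mulVec x = bhat + b ∧ 0 ≤ x ∧
        Ahat.transpose.mulVec y + s = chat + c ∧ 0 ≤ s ∧
        e = (((chat + c) ⬝ᵥ x : ℝ) : EReal)} ∧
    sSup ((fun bc => pval m n Ahat bhat bc.1 chat bc.2) ''
        Ubar m n Ahat bhat chat U) =
      sSup {e : EReal | ∃ b c x y s, (b, c) ∈ U ∧
        Ahat.mulVec x = bhat + b ∧ 0 ≤ x ∧
        Ahat.transpose.mulVec y + s = chat + c ∧ 0 ≤ s ∧
        e = (((bhat + b) ⬝ᵥ y : ℝ) : EReal)} :=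
  q_values_primal_dual_bilinear_formulations_general m n Ahat bhat chat U
end
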